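/- arXiv:2207.08992 — 2 statements merged into one kernel-verified Lean document; each statement's English description precedes it below -/
import Mathlib

section
/- For s > 0, the function f_s(z) = exp(s(z+1)/(z−1)) is not in the little Bloch space: for any fixed x₀ < 0, the sequence z_n = (x₀ + in + 1)/(x₀ + in − 1) lies in D, tends to 1, and (1 − |z_n|²)|f_s'(z_n)| → −2s x₀ e^{s x₀} > 0 as n → ∞. -/
open Complex Filter

/-!
Write `z = ψ w` with `ψ w = (w + 1) / (w - 1)` the Cayley map, so that `f_s (ψ w) = exp (s w)`.
Then `1 - |ψ w|² = -4 Re w / |w - 1|²` and `ψ w - 1 = 2 / (w - 1)`, hence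
`(1 - |z|²) |f_s'(z)| = -2 |s| Re w · e^{s Re w}` exactly, for every `w ≠ 1`. Along the vertical line
`Re w = x₀ < 0` this weight is therefore constant and positive, while `ψ w → 1` as `|w| → ∞`.
-/

noncomputable def cayley (w : ℂ) : ℂ := (w + 1) / (w - 1)

lemma cayley_sub_one {w : ℂ} (hw : w ≠ 1) : cayley w - 1 = 2 / (w - 1) := by
  have : w - 1 ≠ 0 := sub_ne_zero.mpr hw
  unfold cayley
  field_simp
  ring

lemma cayley_ne_one {w : ℂ} (hw : w ≠ 1) : cayley w ≠ 1 := by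
  rw [← sub_ne_zero, cayley_sub_one hw]
  exact div_ne_zero two_ne_zero (sub_ne_zero.mpr hw)

lemma cayley_cayley {w : ℂ} (hw : w ≠ 1) : cayley (cayley w) = w := by
  have : w - 1 ≠ 0 := sub_ne_zero.mpr hw
  rw [cayley, cayley_sub_one hw, cayley]
  field_simp
  ring

lemma one_sub_sq_norm_cayley {w : ℂ} (hw : w ≠ 1) :
    1 - ‖cayley w‖ ^ 2 = -4 * w.re / ‖w - 1‖ ^ 2 := by
  have h : normSq (w - 1) ≠ 0 := by simpa [sub_eq_zero] using hw
  rw [cayley, norm_div, div_pow]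
  simp only [Complex.sq_norm]
  rw [one_sub_div h]
  congr 1
  simp only [normSq_apply, add_re, add_im, sub_re, sub_im, one_re, one_im]
  ring

lemma norm_cayley_lt_one {w : ℂ} (hw : w.re < 0) : ‖cayley w‖ < 1 := by
  have hw1 : w ≠ 1 := fun h => by simp [h] at hw; linarith
  have hpos : 0 < ‖w - 1‖ ^ 2 := pow_pos (norm_pos_iff.mpr (sub_ne_zero.mpr hw1)) 2
  have : 0 < 1 - ‖cayley w‖ ^ 2 := by
    rw [one_sub_sq_norm_cayley hw1]
    exact div_pos (by linarith) hpos
  nlinarith [norm_nonneg (cayley w)]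

lemma tendsto_cayley_cobounded : Tendsto cayley (Bornology.cobounded ℂ) (nhds 1) := by
  have hinv := tendsto_inv₀_cobounded (α := ℂ)
  have hlim : Tendsto (fun w : ℂ => (1 + w⁻¹) / (1 - w⁻¹)) (Bornology.cobounded ℂ) (nhds 1) := by
    have : Tendsto (fun w : ℂ => (1 + w⁻¹) / (1 - w⁻¹)) (Bornology.cobounded ℂ)
        (nhds ((1 + 0) / (1 - 0))) := (hinv.const_add 1).div (hinv.const_sub 1) (by simp)
    simpa using this
  refine hlim.congr' ?_
  filter_upwards [tendsto_norm_atTop_iff_cobounded.2 tendsto_id |>.eventually_gt_atTop 0] with w hw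
  have : w ≠ 0 := norm_pos_iff.mp hw
  rw [cayley]
  field_simp

lemma hasDerivAt_exp_cayley (s : ℂ) {z : ℂ} (hz : z ≠ 1) :
    HasDerivAt (fun z : ℂ => exp (s * (z + 1) / (z - 1)))
      (exp (s * (z + 1) / (z - 1)) * (-2 * s / (z - 1) ^ 2)) z := by
  have hz' : z - 1 ≠ 0 := sub_ne_zero.mpr hz
  have hnum : HasDerivAt (fun z : ℂ => s * (z + 1)) s z := by
    simpa using ((hasDerivAt_id z).add_const 1).const_mul s
  have h := (hnum.div ((hasDerivAt_id z).sub_const 1) hz').cexp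
  simp only [Pi.div_apply, id] at h
  exact h.congr_deriv (by ring)

lemma bloch_weight_exp_cayley (s : ℝ) {w : ℂ} (hw : w ≠ 1) :
    (1 - ‖cayley w‖ ^ 2) *
        ‖deriv (fun z : ℂ => exp ((s : ℂ) * (z + 1) / (z - 1))) (cayley w)‖ =
      -2 * |s| * w.re * Real.exp (s * w.re) := by
  have : ‖w - 1‖ ≠ 0 := norm_ne_zero_iff.mpr (sub_ne_zero.mpr hw)
  have hexp : (s : ℂ) * (cayley w + 1) / (cayley w - 1) = s * w := by
    rw [mul_div_assoc, ← cayley, cayley_cayley hw]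
  rw [(hasDerivAt_exp_cayley s (cayley_ne_one hw)).deriv, hexp, cayley_sub_one hw,
    one_sub_sq_norm_cayley hw, norm_mul, norm_exp]
  simp only [norm_div, norm_mul, norm_neg, norm_pow, Complex.norm_real, norm_ofNat,
    Real.norm_eq_abs, mul_re, ofReal_re, ofReal_im, zero_mul, sub_zero]
  field_simp
  ring

/-- For `s > 0`, `f_s(z) = exp(s(z+1)/(z−1))` is not in the little Bloch space: for fixed
`x₀ < 0`, the points `z_n = (x₀ + in + 1)/(x₀ + in − 1)` lie in `𝔻`, tend to `1`, and
`(1 − |z_n|²)|f_s'(z_n)| → −2 s x₀ e^{s x₀} > 0`. -/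
theorem exp_symbol_not_littleBloch (s : ℝ) (hs : 0 < s) (x₀ : ℝ) (hx₀ : x₀ < 0) :
    let zn : ℕ → ℂ := fun n => ((x₀ : ℂ) + n * Complex.I + 1) / ((x₀ : ℂ) + n * Complex.I - 1)
    (∀ n : ℕ, ‖zn n‖ < 1) ∧
      Tendsto zn atTop (nhds 1) ∧
      Tendsto (fun n : ℕ => (1 - ‖zn n‖ ^ 2) *
          ‖deriv (fun z : ℂ => Complex.exp ((s : ℂ) * (z + 1) / (z - 1))) (zn n)‖)
        atTop (nhds (-2 * s * x₀ * Real.exp (s * x₀))) ∧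
      0 < -2 * s * x₀ * Real.exp (s * x₀) := by
  intro zn
  set w : ℕ → ℂ := fun n => (x₀ : ℂ) + n * Complex.I
  have hzn : zn = cayley ∘ w := rfl
  have hre : ∀ n, (w n).re = x₀ := fun n => by simp [w]
  have hne : ∀ n, w n ≠ 1 := fun n h => by
    have := hre n
    rw [h, one_re] at this
    linarith
  have hw_cobounded : Tendsto w atTop (Bornology.cobounded ℂ) := by
    refine tendsto_norm_atTop_iff_cobounded.1 (tendsto_atTop_mono (fun n => ?_)
      tendsto_natCast_atTop_atTop)
    simpa [w] using abs_im_le_norm (w n)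
  refine ⟨fun n => norm_cayley_lt_one ((hre n).trans_lt hx₀),
    tendsto_cayley_cobounded.comp hw_cobounded, ?_, ?_⟩
  · refine tendsto_const_nhds.congr fun n => ?_
    rw [hzn, Function.comp_apply, bloch_weight_exp_cayley s (hne n), hre, abs_of_pos hs]
  · have := mul_pos (mul_pos hs (neg_pos.mpr hx₀)) (Real.exp_pos (s * x₀))
    linarith
end

section
/- Let φ be a parabolic automorphism of D with fixed point 1 of multiplicity 2, specifically φ = ψ₂ where ψ₂(z) = ((1−i)z − 1)/(z − i − 1), and for s ≥ 0 let f_s(z) = exp(s(z+1)/(z−1)). Then f_s ∘ ψ₂ = e^{2is} f_s on D. -/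
open Complex Metric

/-! The Cayley map `c(z) = (z + 1)/(z - 1)` conjugates `ψ₂` to the translation `w ↦ w + 2i`,
and `f_s = exp (s • c)`, so precomposing with `ψ₂` multiplies `f_s` by `exp (2is)`. -/

theorem cayley_comp_parabolic_psi2 {z : ℂ} (hz1 : z - 1 ≠ 0) (hzI : z - I - 1 ≠ 0) :
    (((1 - I) * z - 1) / (z - I - 1) + 1) / (((1 - I) * z - 1) / (z - I - 1) - 1)
      = (z + 1) / (z - 1) + 2 * I := by
  have hden : ((1 - I) * z - 1) / (z - I - 1) - 1 = -I * (z - 1) / (z - I - 1) := by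
    field_simp
    ring
  rw [hden]
  field_simp
  linear_combination (2 - 2 * z) * I_sq

theorem re_lt_one_of_mem_ball_zero_one {z : ℂ} (hz : z ∈ ball (0 : ℂ) 1) : z.re < 1 :=
  (re_le_norm z).trans_lt (mem_ball_zero_iff.mp hz)

theorem parabolic_eigenfunction_psi2_general (s : ℝ) :
    ∀ z ∈ Metric.ball (0 : ℂ) 1,
      Complex.exp ((s : ℂ) *
          ((((1 - Complex.I) * z - 1) / (z - Complex.I - 1)) + 1) /
          ((((1 - Complex.I) * z - 1) / (z - Complex.I - 1)) - 1))
        = Complex.exp (2 * Complex.I * (s : ℂ)) *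
            Complex.exp ((s : ℂ) * (z + 1) / (z - 1)) := by
  intro z hz
  have hre := re_lt_one_of_mem_ball_zero_one hz
  have hz1 : z - 1 ≠ 0 := sub_ne_zero.mpr fun h => by simp [h] at hre
  have hzI : z - I - 1 ≠ 0 := by
    rw [sub_sub]
    exact sub_ne_zero.mpr fun h => by simp [h] at hre
  rw [mul_div_assoc, cayley_comp_parabolic_psi2 hz1 hzI, ← exp_add]
  ring_nf

/-- For the parabolic automorphism `ψ₂(z) = ((1−i)z − 1)/(z − i − 1)` and `s ≥ 0`,
the function `f_s(z) = exp(s(z+1)/(z−1))` satisfies `f_s ∘ ψ₂ = e^{2is} f_s` on `𝔻`. -/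
theorem parabolic_eigenfunction_psi2 (s : ℝ) (hs : 0 ≤ s) :
    ∀ z ∈ Metric.ball (0 : ℂ) 1,
      Complex.exp ((s : ℂ) *
          ((((1 - Complex.I) * z - 1) / (z - Complex.I - 1)) + 1) /
          ((((1 - Complex.I) * z - 1) / (z - Complex.I - 1)) - 1))
        = Complex.exp (2 * Complex.I * (s : ℂ)) *
            Complex.exp ((s : ℂ) * (z + 1) / (z - 1)) :=
  parabolic_eigenfunction_psi2_general s
end
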